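/- arXiv:0903.0422 — 12 statements merged into one kernel-verified Lean document; each statement's English description precedes it below -/
import Mathlib

section
/- For a clause c (viewed as a set of literals) and a nonnegative integer α, the α-interior of c equals the disjunction over all subsets S of c with |S| = α+1 of the conjunction of literals in S; equivalently, it equals the conjunction over all subsets S of c with |S| = |c| − α of the disjunction of literals in S. (Here the α-interior of a theory Σ is the theory whose models are exactly those v such that every model within Hamming distance α of v is a model of Σ.) -/
/-- Hamming distance between two 0/1 vectors. -/
def Hdist {n : ℕ} (v w : Fin n → Bool) : ℕ :=
  (Finset.univ.filter (fun i => v i ≠ w i)).card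

/-- α-sigmaInt of a model set. -/
def sigmaInt {n : ℕ} (α : ℕ) (M : Set (Fin n → Bool)) : Set (Fin n → Bool) :=
  {v | ∀ w, Hdist v w ≤ α → w ∈ M}

/-- α-sigmaExt of a model set. -/
def sigmaExt {n : ℕ} (α : ℕ) (M : Set (Fin n → Bool)) : Set (Fin n → Bool) :=
  {v | ∃ w ∈ M, Hdist v w ≤ α}

/-- A clause with positive index set `P` and negative index set `N`. -/
structure Clause (n : ℕ) where
  P : Finset (Fin n)
  N : Finset (Fin n)
  disj : Disjoint P N

/-- Satisfaction of a clause by an assignment. -/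
def Clause.sat {n : ℕ} (c : Clause n) (v : Fin n → Bool) : Prop :=
  (∃ i ∈ c.P, v i = true) ∨ (∃ i ∈ c.N, v i = false)

/-- Literals of a clause as pairs (index, required value). -/
def Clause.lits {n : ℕ} (c : Clause n) : Finset (Fin n × Bool) :=
  c.P.image (fun i => (i, true)) ∪ c.N.image (fun i => (i, false))

/-!
A model `v` is in the `α`-interior of a clause iff it satisfies more than `α` of its literals.
Indeed, flipping the variables of the satisfied literals falsifies the clause at distance equal
to their number, while changing at most `α` variables falsifies at most `α` satisfied literals
(a clause mentions each variable once). Both normal forms are then counting restatements of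
"more than `α` satisfied literals": some `α + 1` of them are satisfied, or equivalently every
set of `|c| - α` literals contains a satisfied one.
-/

open Finset

section Counting

variable {ι : Type*} (s : Finset ι) (q : ι → Prop) [DecidablePred q]

lemma le_card_filter_iff_exists_subset (k : ℕ) :
    k ≤ #(s.filter q) ↔ ∃ t ⊆ s, #t = k ∧ ∀ x ∈ t, q x := by
  rw [le_card_iff_exists_subset_card]
  constructor
  · rintro ⟨t, hts, rfl⟩
    exact ⟨t, hts.trans (filter_subset q s), rfl, fun x hx => (mem_filter.mp (hts hx)).2⟩
  · rintro ⟨t, hts, rfl, hq⟩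
    exact ⟨t, fun x hx => mem_filter.mpr ⟨hts hx, hq x hx⟩, rfl⟩

lemma lt_card_filter_iff_forall_subset (k : ℕ) :
    k < #(s.filter q) ↔ ∀ t ⊆ s, #t = #s - k → ∃ x ∈ t, q x := by
  have hsplit := card_filter_add_card_filter_not (s := s) q
  constructor
  · intro hk t hts ht
    by_contra! hnq
    have : t ⊆ s.filter (¬ q ·) := fun x hx => mem_filter.mpr ⟨hts hx, hnq x hx⟩
    have := card_le_card this
    have := card_le_card (filter_subset q s)
    omega
  · intro h
    by_contra! hk
    obtain ⟨t, hts, ht⟩ : ∃ t ⊆ s.filter (¬ q ·), #t = #s - k :=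
      le_card_iff_exists_subset_card.mp (by omega)
    obtain ⟨x, hx, hqx⟩ := h t (hts.trans (filter_subset _ s)) ht
    exact (mem_filter.mp (hts hx)).2 hqx

end Counting

section LiteralSet

variable {n : ℕ} {L : Finset (Fin n × Bool)}

lemma card_filter_sat_le_add_hdist (hL : Set.InjOn Prod.fst (L : Set (Fin n × Bool)))
    (v w : Fin n → Bool) :
    #(L.filter fun p => v p.1 = p.2) ≤ #(L.filter fun p => w p.1 = p.2) + Hdist v w := by
  let lost := L.filter fun p => v p.1 = p.2 ∧ w p.1 ≠ p.2
  have hcover : (L.filter fun p => v p.1 = p.2) ⊆ (L.filter fun p => w p.1 = p.2) ∪ lost := by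
    intro p hp
    simp only [mem_filter, mem_union, lost] at hp ⊢
    tauto
  have hlost : #lost ≤ Hdist v w := by
    refine card_le_card_of_injOn Prod.fst (fun p hp => ?_) (hL.mono fun p hp => ?_)
    · simp only [coe_filter, Set.mem_ofPred_eq, lost] at hp
      simp only [coe_filter, Set.mem_ofPred_eq, mem_univ, true_and]
      rw [hp.2.1]
      exact Ne.symm hp.2.2
    · exact (mem_filter.mp hp).1
  calc #(L.filter fun p => v p.1 = p.2)
      ≤ #((L.filter fun p => w p.1 = p.2) ∪ lost) := card_le_card hcover
    _ ≤ #(L.filter fun p => w p.1 = p.2) + #lost := card_union_le _ _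
    _ ≤ _ := by omega

lemma exists_hdist_le_forall_not_sat (hL : Set.InjOn Prod.fst (L : Set (Fin n × Bool)))
    (v : Fin n → Bool) :
    ∃ w, Hdist v w ≤ #(L.filter fun p => v p.1 = p.2) ∧ ∀ p ∈ L, w p.1 ≠ p.2 := by
  -- Flip `v` exactly on the variables of the literals it satisfies; by consistency of `L`, the
  -- literals it falsifies mention other variables and stay false.
  refine ⟨fun i => if (i, v i) ∈ L then !v i else v i, ?_, ?_⟩
  · refine (card_le_card fun i hi => ?_).trans (card_image_le (f := Prod.fst))
    have hiL : (i, v i) ∈ L := by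
      by_contra hiL
      simp [hiL] at hi
    exact mem_image.mpr ⟨(i, v i), mem_filter.mpr ⟨hiL, rfl⟩, rfl⟩
  · rintro ⟨i, b⟩ hib
    by_cases hvi : v i = b
    · subst hvi
      simp [hib]
    · have : (i, v i) ∉ L := fun h => hvi (congrArg Prod.snd (hL h hib rfl))
      simpa [this] using hvi

lemma mem_sigmaInt_iff (hL : Set.InjOn Prod.fst (L : Set (Fin n × Bool))) (α : ℕ)
    (v : Fin n → Bool) :
    v ∈ sigmaInt α {w | ∃ p ∈ L, w p.1 = p.2} ↔ α < #(L.filter fun p => v p.1 = p.2) := by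
  constructor
  · intro hv
    by_contra! hle
    obtain ⟨w, hvw, hw⟩ := exists_hdist_le_forall_not_sat hL v
    obtain ⟨p, hp, hwp⟩ := hv w (hvw.trans hle)
    exact hw p hp hwp
  · intro hlt w hvw
    by_contra hw
    have := card_filter_sat_le_add_hdist hL v w
    rw [filter_false_of_mem fun p hp hwp => hw ⟨p, hp, hwp⟩, card_empty] at this
    omega

end LiteralSet

namespace Clause

variable {n : ℕ} (c : Clause n)

lemma injOn_fst_lits : Set.InjOn Prod.fst (c.lits : Set (Fin n × Bool)) := by
  rintro ⟨i, b⟩ hi ⟨j, b'⟩ hj (rfl : i = j)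
  have hd := disjoint_left.mp c.disj
  simp only [lits, coe_union, coe_image, Set.mem_union, Set.mem_image, mem_coe,
    Prod.mk.injEq] at hi hj
  grind

lemma sat_iff_exists_mem_lits (v : Fin n → Bool) : c.sat v ↔ ∃ p ∈ c.lits, v p.1 = p.2 := by
  simp [sat, lits, or_and_right, exists_or]

end Clause

theorem stmt0 {n : ℕ} (α : ℕ) (c : Clause n) :
    sigmaInt α {v | c.sat v}
      = {v | ∃ S ⊆ c.lits, S.card = α + 1 ∧ ∀ p ∈ S, v p.1 = p.2} ∧
    sigmaInt α {v | c.sat v}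
      = {v | ∀ S ⊆ c.lits, S.card = c.lits.card - α → ∃ p ∈ S, v p.1 = p.2} := by
  have hmodels : {v | c.sat v} = {v | ∃ p ∈ c.lits, v p.1 = p.2} :=
    Set.ext c.sat_iff_exists_mem_lits
  rw [hmodels]
  constructor <;> ext v <;> rw [mem_sigmaInt_iff c.injOn_fst_lits, Set.mem_ofPred_eq]
  · exact le_card_filter_iff_exists_subset _ _ (α + 1)
  · exact lt_card_filter_iff_forall_subset _ _ α
end

section
/- A set of models M ⊆ {0,1}^n is the model set of some Horn theory if and only if M is closed under componentwise AND, i.e., M = Cl_∧(M). -/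
theorem stmt5 {n : ℕ} (M : Set (Fin n → Bool)) :
    (∃ T : Finset (Clause n), (∀ c ∈ T, c.P.card ≤ 1) ∧
      M = {v | ∀ c ∈ T, c.sat v}) ↔
    (∀ u ∈ M, ∀ w ∈ M, (fun i => u i && w i) ∈ M) := by
  classical
  constructor
  · rintro ⟨T, hP, rfl⟩ u hu w hw c hc
    rcases hu c hc with ⟨i, hi, hui⟩ | ⟨i, hi, hui⟩
    · rcases hw c hc with ⟨j, hj, hwj⟩ | ⟨j, hj, hwj⟩
      · have hij : i = j := Finset.card_le_one.mp (hP c hc) i hi j hj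
        exact Or.inl ⟨i, hi, by simp [hui, hij ▸ hwj]⟩
      · exact Or.inr ⟨j, hj, by simp [hwj]⟩
    · exact Or.inr ⟨i, hi, by simp [hui]⟩
  · intro hM
    have hclosed : ∀ x ∈ M, ∀ y ∈ M, x ⊓ y ∈ M := by
      intro x hx y hy
      exact hM x hx y hy
    have key : ∀ z : Fin n → Bool, z ∉ M →
        ∃ c : Clause n, c.P.card ≤ 1 ∧ ¬ c.sat z ∧ ∀ v ∈ M, c.sat v := by
      intro z hz
      set N : Finset (Fin n) := Finset.univ.filter (fun i => z i = true) with hN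
      set D : Finset (Fin n → Bool) :=
        Finset.univ.filter (fun v => v ∈ M ∧ ∀ i ∈ N, v i = true) with hD
      by_cases hDne : D.Nonempty
      · set m : Fin n → Bool := D.inf' hDne id with hm
        have hmM : m ∈ M := Finset.inf'_mem M hclosed D hDne id
          (fun v hv => (Finset.mem_filter.mp hv).2.1)
        have hmN : ∀ i ∈ N, m i = true := by
          intro i hi
          have : (⊤ : Bool) ≤ m i := by
            have := Finset.le_inf' (a := (⊤ : Bool)) hDne (fun v => v i)
              (fun v hv => by
                have := (Finset.mem_filter.mp hv).2.2 i hi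
                simp only [this]
                exact le_refl _)
            simpa [hm, Finset.inf'_apply] using this
          exact top_le_iff.mp this
        have hmz : m ≠ z := fun h => hz (h ▸ hmM)
        obtain ⟨j, hj⟩ : ∃ j, m j ≠ z j := Function.ne_iff.mp hmz
        have hzj : z j = false := by
          cases hzj : z j with
          | false => rfl
          | true =>
            exact absurd (hmN j (by simp [hN, hzj])) (by simp [hj, hzj] at *; simp_all)
        have hmj : m j = true := by
          cases hmj : m j with
          | true => rfl
          | false => exact absurd (hmj.trans hzj.symm) hj
        refine ⟨⟨{j}, N, by simp [hN, hzj]⟩, by simp, ?_, ?_⟩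
        · rintro (⟨i, hi, hvi⟩ | ⟨i, hi, hvi⟩)
          · simp only [Finset.mem_singleton] at hi
            rw [hi, hzj] at hvi
            exact Bool.noConfusion hvi
          · have := (Finset.mem_filter.mp hi).2
            simp [this] at hvi
        · intro v hv
          by_cases hvD : v ∈ D
          · left
            refine ⟨j, by simp, ?_⟩
            have hle : m ≤ v := Finset.inf'_le id hvD
            have := hle j
            rw [hmj] at this
            exact top_le_iff.mp this
          · right
            simp only [hD, Finset.mem_filter, Finset.mem_univ, true_and, not_and] at hvD
            push_neg at hvD
            obtain ⟨i, hi, hvi⟩ := hvD hv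
            exact ⟨i, hi, by simpa using hvi⟩
      · refine ⟨⟨∅, N, by simp⟩, by simp, ?_, ?_⟩
        · rintro (⟨i, hi, _⟩ | ⟨i, hi, hvi⟩)
          · simp at hi
          · have := (Finset.mem_filter.mp hi).2
            simp [this] at hvi
        · intro v hv
          right
          have : v ∉ D := fun h => hDne ⟨v, h⟩
          simp only [hD, Finset.mem_filter, Finset.mem_univ, true_and, not_and] at this
          push_neg at this
          obtain ⟨i, hi, hvi⟩ := this hv
          exact ⟨i, hi, by simpa using hvi⟩
    choose f hf1 hf2 hf3 using key
    set Z : Finset (Fin n → Bool) := Finset.univ.filter (fun z => z ∉ M) with hZ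
    refine ⟨Z.attach.image (fun z => f z.1 (by have h := Finset.mem_filter.mp z.2; exact h.2)), ?_, ?_⟩
    · intro c hc
      simp only [Finset.mem_image] at hc
      obtain ⟨z, _, rfl⟩ := hc
      exact hf1 _ _
    · ext v
      simp only [Set.mem_setOf_eq]
      constructor
      · intro hv c hc
        simp only [Finset.mem_image] at hc
        obtain ⟨z, _, rfl⟩ := hc
        exact hf3 _ _ v hv
      · intro h
        by_contra hv
        have hvZ : v ∈ Z := by simp [hZ, hv]
        have := h (f v hv) (Finset.mem_image.mpr ⟨⟨v, hvZ⟩, Finset.mem_attach _ _, rfl⟩)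
        exact hf2 v hv this
end

section
/- The α-interior of a Horn theory is Horn: if M ⊆ {0,1}^n is closed under componentwise AND, then σ_{−α}(M) = {v : every w at Hamming distance at most α from v lies in M} is also closed under componentwise AND. -/
theorem stmt6 {n : ℕ} (α : ℕ) (M : Set (Fin n → Bool))
    (hcl : ∀ u ∈ M, ∀ w ∈ M, (fun i => u i && w i) ∈ M) :
    ∀ u ∈ sigmaInt α M, ∀ w ∈ sigmaInt α M,
      (fun i => u i && w i) ∈ sigmaInt α M := by
  intro u hu w hw x hx
  set u' : Fin n → Bool := fun i => if (u i && w i) = x i then u i else x i with hu'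
  set w' : Fin n → Bool := fun i => if (u i && w i) = x i then w i else x i with hw'
  have hdu : Hdist u u' ≤ Hdist (fun i => u i && w i) x := by
    apply Finset.card_le_card
    intro i hi
    simp only [Finset.mem_filter, Finset.mem_univ, true_and, hu'] at *
    intro h
    exact hi (by simp [h])
  have hdw : Hdist w w' ≤ Hdist (fun i => u i && w i) x := by
    apply Finset.card_le_card
    intro i hi
    simp only [Finset.mem_filter, Finset.mem_univ, true_and, hw'] at *
    intro h
    exact hi (by simp [h])
  have hu'M : u' ∈ M := hu u' (le_trans hdu hx)
  have hw'M : w' ∈ M := hw w' (le_trans hdw hx)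
  have := hcl u' hu'M w' hw'M
  have hx' : (fun i => u' i && w' i) = x := by
    funext i
    simp only [hu', hw']
    by_cases h : (u i && w i) = x i
    · simp [h]
    · simp [h, Bool.and_self]
  rwa [hx'] at this
end

section
/- Let Σ be a Horn theory, c a clause, and α a nonnegative integer. If there exists a clause d ∈ Σ such that |N(d) \ N(c)| ≤ α − 1, or such that |N(d) \ N(c)| = α and P(d) ⊆ P(c), then σ_{−α}(Σ) ⊨ c (every model of the α-interior of Σ satisfies c). -/
theorem stmt7 {n : ℕ} (α : ℕ) (T : Finset (Clause n))
    (hH : ∀ d ∈ T, d.P.card ≤ 1) (c : Clause n)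
    (h : ∃ d ∈ T, (d.N \ c.N).card < α ∨ ((d.N \ c.N).card = α ∧ d.P ⊆ c.P)) :
    ∀ v ∈ sigmaInt α {v | ∀ d ∈ T, d.sat v}, c.sat v := by
  rintro v hv
  obtain ⟨d, hdT, hd⟩ := h
  by_contra hc
  simp only [Clause.sat, not_or, not_exists] at hc
  push_neg at hc
  obtain ⟨hcP, hcN⟩ := hc
  set w : Fin n → Bool := fun i => if i ∈ d.N then true else if i ∈ d.P then false else v i
    with hwdef
  have hw : ¬ d.sat w := by
    rintro (⟨i, hi, hiv⟩ | ⟨i, hi, hiv⟩)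
    · have hin : i ∉ d.N := Finset.disjoint_left.mp d.disj hi
      simp [hwdef, hin, hi] at hiv
    · simp [hwdef, hi] at hiv
  have hsub : ∀ i, v i ≠ w i → i ∈ (d.N \ c.N) ∪ d.P := by
    intro i hi
    by_cases hN : i ∈ d.N
    · have : v i = false := by
        cases hvi : v i
        · rfl
        · exact absurd (by simp [hwdef, hN, hvi]) hi
      have : i ∉ c.N := fun hiN => (hcN i hiN) this
      exact Finset.mem_union_left _ (Finset.mem_sdiff.mpr ⟨hN, this⟩)
    · by_cases hP : i ∈ d.P
      · exact Finset.mem_union_right _ hP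
      · exact absurd (show v i = w i by simp [hwdef, hN, hP]) hi
  have hdist : Hdist v w ≤ α := by
    rcases hd with hlt | ⟨heq, hPsub⟩
    · calc Hdist v w ≤ ((d.N \ c.N) ∪ d.P).card := by
            apply Finset.card_le_card
            intro i hi
            simp only [Finset.mem_filter, Finset.mem_univ, true_and] at hi
            exact hsub i hi
        _ ≤ (d.N \ c.N).card + d.P.card := Finset.card_union_le _ _
        _ ≤ (d.N \ c.N).card + 1 := Nat.add_le_add_left (hH d hdT) _
        _ ≤ α := by omega
    · have hsub2 : ∀ i, v i ≠ w i → i ∈ d.N \ c.N := by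
        intro i hi
        rcases Finset.mem_union.mp (hsub i hi) with h1 | h1
        · exact h1
        · exfalso
          have hiN : i ∉ d.N := Finset.disjoint_left.mp d.disj h1
          have : w i = false := by simp [hwdef, hiN, h1]
          have hv1 : v i = true := by
            cases hvi : v i
            · exact absurd (hvi.trans this.symm) hi
            · rfl
          exact hcP i (hPsub h1) hv1
      calc Hdist v w ≤ (d.N \ c.N).card := by
            apply Finset.card_le_card
            intro i hi
            simp only [Finset.mem_filter, Finset.mem_univ, true_and] at hi
            exact hsub2 i hi
        _ ≤ α := heq.le
  exact hw ((hv w hdist) d hdT)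
end

section
/- Let Σ be a Horn theory over n variables, c a clause, and α a nonnegative integer. If (i) |N(d) \ N(c)| ≥ α for all d ∈ Σ and (ii) every d ∈ Σ with |N(d) \ N(c)| = α satisfies ∅ ≠ P(d) ⊆ N(c), then σ_{−α}(Σ) ⊭ c. In particular, the model v with ON(v) = N(c) is a model of σ_{−α}(Σ) not satisfying c. -/
theorem stmt8 {n : ℕ} (α : ℕ) (T : Finset (Clause n))
    (hH : ∀ d ∈ T, d.P.card ≤ 1) (c : Clause n)
    (h1 : ∀ d ∈ T, α ≤ (d.N \ c.N).card)
    (h2 : ∀ d ∈ T, (d.N \ c.N).card = α → d.P.Nonempty ∧ d.P ⊆ c.N) :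
    (fun i => decide (i ∈ c.N)) ∈ sigmaInt α {v | ∀ d ∈ T, d.sat v} ∧
    ¬ c.sat (fun i => decide (i ∈ c.N)) := by
  set v : Fin n → Bool := fun i => decide (i ∈ c.N) with hv
  constructor
  · intro w hw d hd
    rw [Hdist] at hw
    by_cases hneg : ∃ i ∈ d.N, w i = false
    · exact Or.inr hneg
    push_neg at hneg
    simp only [Bool.ne_false_iff] at hneg
    -- every i ∈ d.N \ c.N differs between v and w
    have hsub : d.N \ c.N ⊆ Finset.univ.filter (fun i => v i ≠ w i) := by
      intro i hi
      rw [Finset.mem_sdiff] at hi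
      simp only [Finset.mem_filter, Finset.mem_univ, true_and, hv]
      rw [hneg i hi.1]
      simp [hi.2]
    have hcard : (d.N \ c.N).card = α := by
      have := Finset.card_le_card hsub
      have := h1 d hd
      omega
    have heq : d.N \ c.N = Finset.univ.filter (fun i => v i ≠ w i) := by
      apply Finset.eq_of_subset_of_card_le hsub
      rw [hcard]; exact hw
    obtain ⟨hPne, hPsub⟩ := h2 d hd hcard
    obtain ⟨i, hi⟩ := hPne
    have hiN : i ∈ c.N := hPsub hi
    have hvi : v i = true := by simp [hv, hiN]
    have : i ∉ Finset.univ.filter (fun i => v i ≠ w i) := by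
      rw [← heq, Finset.mem_sdiff]
      tauto
    simp only [Finset.mem_filter, Finset.mem_univ, true_and, not_not] at this
    exact Or.inl ⟨i, hi, this ▸ hvi⟩
  · rintro (⟨i, hi, hvi⟩ | ⟨i, hi, hvi⟩)
    · have : i ∉ c.N := Finset.disjoint_left.mp c.disj hi
      simp [hv, this] at hvi
    · simp [hv, hi] at hvi
end

section
/- Let Σ be a Horn theory, c a clause, and α a nonnegative integer. If d ∈ Σ satisfies |N(d) \ N(c)| = α and P(d) = P(d) \ (P(c) ∪ N(c)) = {j} for some index j, then σ_{−α}(Σ) ⊨ c ∨ x_j. -/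
theorem stmt9 {n : ℕ} (α : ℕ) (T : Finset (Clause n))
    (hH : ∀ d ∈ T, d.P.card ≤ 1) (c : Clause n) (j : Fin n) (d : Clause n)
    (hd : d ∈ T) (h1 : (d.N \ c.N).card = α) (h2 : d.P = {j})
    (h3 : j ∉ c.P ∪ c.N) :
    ∀ v ∈ sigmaInt α {v | ∀ e ∈ T, e.sat v}, c.sat v ∨ v j = true := by
  intro v hv
  by_contra hcon
  push_neg at hcon
  obtain ⟨hc, hj⟩ := hcon
  have hcN : ∀ i ∈ c.N, v i = true := by
    intro i hi
    by_contra h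
    exact hc (Or.inr ⟨i, hi, by simpa using h⟩)
  set w : Fin n → Bool := fun i => if i ∈ d.N \ c.N then true else v i with hw
  have hdist : Hdist v w ≤ α := by
    rw [← h1]
    apply Finset.card_le_card
    intro i hi
    simp only [Hdist, Finset.mem_filter, Finset.mem_univ, true_and] at hi
    by_contra h
    exact hi (if_neg h).symm
  have hwT := hv w hdist d hd
  have hjN : j ∉ d.N := by
    intro h
    exact (Finset.disjoint_left.mp d.disj (h2 ▸ Finset.mem_singleton_self j)) h
  rcases hwT with ⟨i, hi, hwi⟩ | ⟨i, hi, hwi⟩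
  · rw [h2, Finset.mem_singleton] at hi
    subst hi
    have : w i = v i := by simp [hw, hjN]
    rw [this] at hwi
    exact hj hwi
  · by_cases hic : i ∈ c.N
    · have hvi : v i = false := by
        have : w i = v i := by simp [hw, hic]
        rw [this] at hwi; exact hwi
      rw [hcN i hic] at hvi
      exact Bool.true_eq_false.mp hvi
    · have hmem : i ∈ d.N \ c.N := Finset.mem_sdiff.mpr ⟨hi, hic⟩
      have hwt : w i = true := if_pos hmem
      rw [hwt] at hwi
      exact Bool.true_eq_false.mp hwi
end

section
/- Let M ⊆ {0,1}^n be closed under componentwise AND (the model set of a Horn theory), and let v ∈ {0,1}^n with {w ∈ M : w ≥ v} nonempty. Then v ∈ M if and only if the componentwise AND of all w ∈ M with w ≥ v equals v. Moreover if M is the model set of a finite Horn theory, it suffices to take the AND over the characteristic models w ∈ char(Σ) with w ≥ v. -/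
/-- Closure of a set of models under componentwise AND. -/
inductive ClAnd {n : ℕ} (S : Set (Fin n → Bool)) : (Fin n → Bool) → Prop
  | base {v : Fin n → Bool} : v ∈ S → ClAnd S v
  | and {u v : Fin n → Bool} : ClAnd S u → ClAnd S v → ClAnd S (fun i => u i && v i)

/-- Characteristic models of a model set. -/
def charSet {n : ℕ} (M : Set (Fin n → Bool)) : Set (Fin n → Bool) :=
  {v | v ∈ M ∧ ¬ ClAnd (M \ {v}) v}

lemma clAnd_false_aux {n : ℕ} {S : Set (Fin n → Bool)} {x : Fin n → Bool}
    (h : ClAnd S x) : ∀ i, x i = false → ∃ u ∈ S, (∀ j, x j ≤ u j) ∧ u i = false := by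
  induction h with
  | base hx => exact fun i hi => ⟨_, hx, fun j => le_refl _, hi⟩
  | @and a b h1 h2 ih1 ih2 =>
    intro i hi
    simp only [Bool.and_eq_false_iff] at hi
    rcases hi with h | h
    · obtain ⟨u', hu', hge, hui⟩ := ih1 i h
      refine ⟨u', hu', fun j => le_trans ?_ (hge j), hui⟩
      simp only []
      cases a j <;> cases b j <;> simp
    · obtain ⟨u', hu', hge, hui⟩ := ih2 i h
      refine ⟨u', hu', fun j => le_trans ?_ (hge j), hui⟩
      simp only []
      cases a j <;> cases b j <;> simp

lemma char_false_aux {n : ℕ} (M : Set (Fin n → Bool)) :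
    ∀ k : ℕ, ∀ v : Fin n → Bool,
      (Finset.univ.filter (fun j => v j = false)).card = k → v ∈ M →
      ∀ i, v i = false →
      ∃ w ∈ charSet M, (∀ j, v j ≤ w j) ∧ w i = false := by
  intro k
  induction k using Nat.strong_induction_on with
  | _ k ih =>
    intro v hk hv i hi
    by_cases hc : ClAnd (M \ {v}) v
    · obtain ⟨u, hu, hge, hui⟩ := clAnd_false_aux hc i hi
      have hune : u ≠ v := fun h => hu.2 (by simp [h])
      have hsub : (Finset.univ.filter (fun j => u j = false)) ⊂
          (Finset.univ.filter (fun j => v j = false)) := by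
        constructor
        · intro j hj
          simp only [Finset.mem_filter, Finset.mem_univ, true_and] at hj ⊢
          have := hge j
          cases hvj : v j
          · rfl
          · rw [hvj] at this; rw [hj] at this; exact absurd this (by simp)
        · intro hcon
          apply hune
          funext j
          by_contra hne
          have h1 := hge j
          have hvj : v j = false ∧ u j = true := by
            cases hvj : v j <;> cases huj : u j <;> simp_all
            exact absurd h1 (by decide)
          have := hcon (Finset.mem_filter.mpr ⟨Finset.mem_univ j, hvj.1⟩)
          rw [Finset.mem_filter] at this
          simp [hvj.2] at this
      have hcard : (Finset.univ.filter (fun j => u j = false)).card < k := by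
        rw [← hk]; exact Finset.card_lt_card hsub
      obtain ⟨w, hw, hge', hwi⟩ := ih _ hcard u rfl hu.1 i hui
      exact ⟨w, hw, fun j => le_trans (hge j) (hge' j), hwi⟩
    · exact ⟨v, ⟨hv, hc⟩, fun j => le_refl _, hi⟩

lemma char_false {n : ℕ} (M : Set (Fin n → Bool)) {v : Fin n → Bool}
    (hv : v ∈ M) {i : Fin n} (hi : v i = false) :
    ∃ w ∈ charSet M, (∀ j, v j ≤ w j) ∧ w i = false :=
  char_false_aux M _ v rfl hv i hi

theorem stmt13 {n : ℕ} (M : Set (Fin n → Bool))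
    (hcl : ∀ u ∈ M, ∀ w ∈ M, (fun i => u i && w i) ∈ M)
    (v : Fin n → Bool) (hne : ∃ w ∈ M, ∀ j, v j ≤ w j) :
    (v ∈ M ↔ ∀ i, (v i = true ↔ ∀ w ∈ M, (∀ j, v j ≤ w j) → w i = true)) ∧
    (v ∈ M ↔ ∀ i, (v i = true ↔
      ∀ w ∈ charSet M, (∀ j, v j ≤ w j) → w i = true)) := by
  have fwd : v ∈ M → ∀ i, (v i = true ↔ ∀ w ∈ M, (∀ j, v j ≤ w j) → w i = true) := by
    intro hv i
    constructor
    · intro hvi w _ hge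
      have := hge i
      rw [hvi] at this
      exact le_antisymm (Bool.le_true _) this
    · intro h
      exact h v hv (fun j => le_refl _)
  have bwd : (∀ i, (v i = true ↔ ∀ w ∈ M, (∀ j, v j ≤ w j) → w i = true)) → v ∈ M := by
    intro h
    -- take the finite set of all models ≥ v
    classical
    have hfin : Set.Finite {w : Fin n → Bool | w ∈ M ∧ ∀ j, v j ≤ w j} :=
      Set.toFinite _
    set F : Finset (Fin n → Bool) := hfin.toFinset with hF
    have hFmem : ∀ w, w ∈ F ↔ w ∈ M ∧ ∀ j, v j ≤ w j := by
      intro w; rw [hF, Set.Finite.mem_toFinset]; rfl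
    obtain ⟨w0, hw0, hw0ge⟩ := hne
    have hFne : F.Nonempty := ⟨w0, (hFmem w0).mpr ⟨hw0, hw0ge⟩⟩
    -- the inf of F is in M
    have hinf : ∀ (G : Finset (Fin n → Bool)), G.Nonempty → (∀ w ∈ G, w ∈ M) →
        (fun i => G.inf (fun w => w i)) ∈ M := by
      intro G hGne
      induction hGne using Finset.Nonempty.cons_induction with
      | singleton a =>
        intro hG
        have : (fun i => ({a} : Finset (Fin n → Bool)).inf (fun w => w i)) = a := by
          funext i; simp
        rw [this]
        exact hG a (Finset.mem_singleton_self a)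
      | cons a s ha hs ih =>
        intro hG
        have hm : (fun i => s.inf (fun w => w i)) ∈ M :=
          ih (fun w hw => hG w (Finset.mem_cons_of_mem hw))
        have ha' : a ∈ M := hG a (Finset.mem_cons_self a s)
        have := hcl a ha' _ hm
        convert this using 1
        funext i
        rw [Finset.inf_cons]
        rfl
    have hm : (fun i => F.inf (fun w => w i)) ∈ M :=
      hinf F hFne (fun w hw => ((hFmem w).mp hw).1)
    have heq : (fun i => F.inf (fun w => w i)) = v := by
      funext i
      have hiff : F.inf (fun w => w i) = true ↔ ∀ w ∈ F, w i = true := by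
        simpa using Finset.inf_eq_top_iff (fun w => w i) F
      cases hvi : v i
      · have : ¬ ∀ w ∈ M, (∀ j, v j ≤ w j) → w i = true := by
          intro hall
          have := (h i).mpr hall
          rw [hvi] at this; exact absurd this (by simp)
        rcases Bool.eq_false_or_eq_true (F.inf (fun w => w i)) with ht | hf
        swap
        · exact hf
        · exfalso
          apply this
          intro w hw hge
          exact hiff.mp ht w ((hFmem w).mpr ⟨hw, hge⟩)
      · apply hiff.mpr
        intro w hw
        exact ((h i).mp hvi) w ((hFmem w).mp hw).1 ((hFmem w).mp hw).2
    rw [heq] at hm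
    exact hm
  have charsub : charSet M ⊆ M := fun w hw => hw.1
  have equiv2 : v ∈ M → ∀ i,
      ((∀ w ∈ M, (∀ j, v j ≤ w j) → w i = true) ↔
       (∀ w ∈ charSet M, (∀ j, v j ≤ w j) → w i = true)) := by
    intro _ i
    constructor
    · intro h w hw hge; exact h w (charsub hw) hge
    · intro h w hw hge
      by_contra hwi
      have hwi' : w i = false := by
        cases hwi2 : w i
        · rfl
        · exact absurd hwi2 hwi
      obtain ⟨w', hw', hge', hwi''⟩ := char_false M hw hwi'
      have := h w' hw' (fun j => le_trans (hge j) (hge' j))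
      rw [this] at hwi''
      exact absurd hwi'' (by simp)
  refine ⟨⟨fwd, bwd⟩, ?_⟩
  constructor
  · intro hv i
    exact (fwd hv i).trans (equiv2 hv i)
  · intro h
    apply bwd
    intro i
    constructor
    · intro hvi w hw hge
      have := hge i; rw [hvi] at this
      exact le_antisymm (Bool.le_true _) this
    · intro hall
      apply (h i).mpr
      intro w hw hge
      exact hall w (charsub hw) hge
end

section
/- Let Σ be a Horn theory with characteristic set char(Σ), and α a nonnegative integer. Then the model set of the Horn envelope of the α-exterior of Σ satisfies mod(σ_α(Σ)_e) = Cl_∧( ⋃_{v ∈ char(Σ)} N_α(v) ), where N_α(v) is the set of models within Hamming distance α of v. -/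
lemma Hdist_comm {n : ℕ} (v w : Fin n → Bool) : Hdist v w = Hdist w v := by
  unfold Hdist; congr 1; ext i; simp [ne_comm]

lemma ClAnd_mono {n : ℕ} {S T : Set (Fin n → Bool)} (hST : S ⊆ T) {v} (h : ClAnd S v) :
    ClAnd T v := by
  induction h with
  | base h => exact .base (hST h)
  | and _ _ ih1 ih2 => exact .and ih1 ih2

lemma ClAnd_trans {n : ℕ} {S T : Set (Fin n → Bool)} {v} (h : ClAnd S v)
    (hST : ∀ u ∈ S, ClAnd T u) : ClAnd T v := by
  induction h with
  | base h => exact hST _ h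
  | and _ _ ih1 ih2 => exact .and ih1 ih2

def Ble {n : ℕ} (v u : Fin n → Bool) : Prop := ∀ i, v i = true → u i = true

lemma ClAnd_restrict {n : ℕ} {S : Set (Fin n → Bool)} {v} (h : ClAnd S v) :
    ClAnd {u | u ∈ S ∧ Ble v u} v := by
  induction h with
  | base h => exact .base ⟨h, fun i hi => hi⟩
  | @and u w _ _ ih1 ih2 =>
    refine .and (ClAnd_mono ?_ ih1) (ClAnd_mono ?_ ih2)
    · rintro x ⟨hx, hb⟩
      exact ⟨hx, fun i hi => hb i (by simpa using (Bool.and_eq_true _ _ |>.mp hi).1)⟩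
    · rintro x ⟨hx, hb⟩
      exact ⟨hx, fun i hi => hb i (by simpa using (Bool.and_eq_true _ _ |>.mp hi).2)⟩

lemma toChar {n : ℕ} (M : Set (Fin n → Bool)) (v : Fin n → Bool) (hv : v ∈ M) :
    ClAnd (charSet M) v := by
  by_cases hc : ClAnd (M \ {v}) v
  · have h2 := ClAnd_restrict hc
    refine ClAnd_trans h2 ?_
    rintro u ⟨⟨huM, hune⟩, hble⟩
    exact toChar M u huM
  · exact .base ⟨hv, hc⟩
termination_by (Finset.univ.filter (fun i => v i = false)).card
decreasing_by
  apply Finset.card_lt_card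
  constructor
  · intro i hi
    simp only [Finset.mem_filter, Finset.mem_univ, true_and] at hi ⊢
    cases h : v i
    · rfl
    · rw [hble i h] at hi; exact absurd hi (by simp)
  · intro hsub
    refine absurd (show u ∈ ({v} : Set _) from ?_) hune
    simp only [Set.mem_singleton_iff]
    funext i
    cases h : v i
    · have := hsub (Finset.mem_filter.mpr ⟨Finset.mem_univ i, h⟩)
      exact (Finset.mem_filter.mp this).2
    · exact hble i h

lemma ball_clo {n : ℕ} (α : ℕ) (M : Set (Fin n → Bool)) {v : Fin n → Bool}
    (h : ClAnd (charSet M) v) :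
    ∀ w, Hdist w v ≤ α → ClAnd (⋃ x ∈ charSet M, {w | Hdist x w ≤ α}) w := by
  induction h with
  | @base v hv =>
    intro w hw
    exact .base (Set.mem_biUnion hv (by simpa [Hdist_comm] using hw))
  | @and u u' h1 h2 ih1 ih2 =>
    intro w hw
    have hsplit : w = fun i =>
        (w i || (u i && !(u i && u' i))) && (w i || (u' i && !(u i && u' i))) := by
      funext i; cases w i <;> cases u i <;> cases u' i <;> rfl
    rw [hsplit]
    refine .and (ih1 _ (le_trans ?_ hw)) (ih2 _ (le_trans ?_ hw))
    · apply Finset.card_le_card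
      intro i hi
      simp only [Finset.mem_filter, Finset.mem_univ, true_and] at hi ⊢
      intro hip
      apply hi
      rw [hip]
      cases u i <;> cases u' i <;> rfl
    · apply Finset.card_le_card
      intro i hi
      simp only [Finset.mem_filter, Finset.mem_univ, true_and] at hi ⊢
      intro hip
      apply hi
      rw [hip]
      cases u i <;> cases u' i <;> rfl

theorem stmt14 {n : ℕ} (α : ℕ) (M : Set (Fin n → Bool))
    (hcl : ∀ u ∈ M, ∀ w ∈ M, (fun i => u i && w i) ∈ M) :
    {w | ClAnd (sigmaExt α M) w}
      = {w | ClAnd (⋃ v ∈ charSet M, {w | Hdist v w ≤ α}) w} := by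
  ext w
  simp only [Set.mem_setOf_eq]
  constructor
  · intro hw
    induction hw with
    | base h =>
      obtain ⟨m, hm, hd⟩ := h
      exact ball_clo α M (toChar M m hm) _ hd
    | and _ _ ih1 ih2 => exact .and ih1 ih2
  · intro hw
    refine ClAnd_mono ?_ hw
    intro x hx
    simp only [Set.mem_iUnion, Set.mem_setOf_eq] at hx
    obtain ⟨v, hv, hd⟩ := hx
    exact ⟨v, hv.1, by rwa [Hdist_comm]⟩
end

section
/- Let Σ be a Horn theory, c a clause, and α a nonnegative integer. Then σ_α(Σ)_e ⊨ c (the Horn envelope of the α-exterior entails c) if and only if: (i) |OFF(v) ∩ N(c)| ≥ α for all v ∈ char(Σ), and (ii) if S = {v ∈ char(Σ) : |OFF(v) ∩ N(c)| = α} is nonempty, then P(c) ⊄ ⋃_{v∈S} OFF(v), i.e., P(c) is not covered by the OFF-sets of models in S. -/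
/-- The set of coordinates where v is 0. -/
def OFFs {n : ℕ} (v : Fin n → Bool) : Finset (Fin n) :=
  Finset.univ.filter (fun i => v i = false)

/-!
The Horn envelope of a set `S` of models is its `∧`-closure. A clause `¬x_N ∨ x_P` fails in that
closure exactly when some model of `S` is true on all of `N` and, for each `j ∈ P`, some model of
`S` is true on `N` and false at `j`: the AND of these models falsifies the clause, and conversely
the models of `S` above a falsifying element of the closure are true on `N`, and for each `j ∈ P`
one of them is false at `j`.

For `S` the `α`-exterior of `M`, a model `v ∈ M` reaches a model true on `N` with
`|OFF(v) ∩ N|` flips, and one that is moreover false at `j ∈ P` with one flip more unless `v_j = 0`.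
Every model of `M` lies below a characteristic model with no larger `|OFF ∩ N|`, which may be
chosen to be `0` at `j` whenever the original model is, so only `char(M)` matters.
-/

open Finset

namespace ClAnd

variable {n : ℕ} {S : Set (Fin n → Bool)}

theorem exists_ge {b : Fin n → Bool} (h : ClAnd S b) : ∃ u ∈ S, b ≤ u := by
  induction h with
  | base hv => exact ⟨_, hv, le_rfl⟩
  | @and u w _ _ ihu _ =>
    obtain ⟨u', hu', hle⟩ := ihu
    exact ⟨u', hu', (inf_le_left : u ⊓ w ≤ u).trans hle⟩

theorem exists_ge_of_eq_false {b : Fin n → Bool} (h : ClAnd S b) {i : Fin n} (hi : b i = false) :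
    ∃ u ∈ S, b ≤ u ∧ u i = false := by
  induction h with
  | base hv => exact ⟨_, hv, le_rfl, hi⟩
  | @and u w _ _ ihu ihw =>
    rcases Bool.and_eq_false_iff.1 hi with hu | hw
    · obtain ⟨u', hu', hle, hu'i⟩ := ihu hu
      exact ⟨u', hu', (inf_le_left : u ⊓ w ≤ u).trans hle, hu'i⟩
    · obtain ⟨w', hw', hle, hw'i⟩ := ihw hw
      exact ⟨w', hw', (inf_le_right : u ⊓ w ≤ w).trans hle, hw'i⟩

theorem finset_inf' {s : Finset (Fin n → Bool)} (hs : s.Nonempty) (hsS : ∀ u ∈ s, u ∈ S) :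
    ClAnd S (s.inf' hs id) :=
  s.inf'_induction hs id (fun _ h₁ _ h₂ => h₁.and h₂) fun u hu => base (hsS u hu)

end ClAnd

theorem Clause.not_sat_iff {n : ℕ} (c : Clause n) (w : Fin n → Bool) :
    ¬ c.sat w ↔ (∀ i ∈ c.P, w i = false) ∧ ∀ i ∈ c.N, w i = true := by
  simp [Clause.sat]

theorem forall_clAnd_sat_iff {n : ℕ} (S : Set (Fin n → Bool)) (c : Clause n) :
    (∀ w, ClAnd S w → c.sat w) ↔
      ((∃ u ∈ S, ∀ i ∈ c.N, u i = true) →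
        ∃ j ∈ c.P, ¬ ∃ u ∈ S, (∀ i ∈ c.N, u i = true) ∧ u j = false) := by
  constructor
  · rintro h ⟨u₀, hu₀, hu₀N⟩
    by_contra! hcov
    choose! f hfS hfN hfj using hcov
    set s := insert u₀ (c.P.image f)
    have hs : s.Nonempty := insert_nonempty _ _
    have hsS : ∀ u ∈ s, u ∈ S := by simpa [s] using ⟨hu₀, hfS⟩
    have hsN : ∀ u ∈ s, ∀ i ∈ c.N, u i = true := by simpa [s] using ⟨hu₀N, hfN⟩
    refine (c.not_sat_iff _).2 ⟨fun j hj => ?_, fun i hi => ?_⟩ (h _ (ClAnd.finset_inf' hs hsS))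
    · have hle : s.inf' hs id ≤ f j := inf'_le id (mem_insert_of_mem (mem_image_of_mem f hj))
      exact le_bot_iff.1 ((hle j).trans_eq (hfj j hj))
    · rw [Finset.inf'_apply]
      exact top_le_iff.1 ((le_inf'_iff hs _).2 fun u hu => (hsN u hu i hi).ge)
  · intro h w hw
    by_contra hsat
    obtain ⟨hwP, hwN⟩ := (c.not_sat_iff w).1 hsat
    have body_of_ge : ∀ u, w ≤ u → ∀ i ∈ c.N, u i = true :=
      fun u hle i hi => Bool.le_iff_imp.1 (hle i) (hwN i hi)
    obtain ⟨u, hu, hwu⟩ := hw.exists_ge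
    obtain ⟨j, hj, hnone⟩ := h ⟨u, hu, body_of_ge u hwu⟩
    obtain ⟨u', hu', hwu', hu'j⟩ := hw.exists_ge_of_eq_false (hwP j hj)
    exact hnone ⟨u', hu', body_of_ge u' hwu', hu'j⟩

section Distance

variable {n : ℕ}

def setTrueOn (s : Finset (Fin n)) (v : Fin n → Bool) : Fin n → Bool :=
  fun i => if i ∈ s then true else v i

theorem hdist_setTrueOn_le (s : Finset (Fin n)) (v : Fin n → Bool) :
    Hdist (setTrueOn s v) v ≤ (OFFs v ∩ s).card :=
  card_le_card fun i => by by_cases hi : i ∈ s <;> simp [setTrueOn, OFFs, hi]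

theorem hdist_update_le (w : Fin n → Bool) (j : Fin n) (b : Bool) :
    Hdist (Function.update w j b) w ≤ 1 := by
  refine (card_le_card fun i hi => mem_singleton.2 ?_).trans (card_singleton j).le
  by_contra hij
  exact (mem_filter.1 hi).2 (Function.update_of_ne hij b w)

theorem offs_antitone : Antitone (OFFs : (Fin n → Bool) → Finset (Fin n)) :=
  fun v w hvw i hi => by
    simp only [OFFs, mem_filter, mem_univ, true_and] at hi ⊢
    exact le_bot_iff.1 ((hvw i).trans_eq hi)

theorem card_offs_inter_le_of_le {v w : Fin n → Bool} (hvw : v ≤ w) (s : Finset (Fin n)) :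
    (OFFs w ∩ s).card ≤ (OFFs v ∩ s).card :=
  card_le_card (inter_subset_inter_right (offs_antitone hvw))

theorem offs_inter_subset_of_forall_true {s : Finset (Fin n)} {u : Fin n → Bool}
    (hu : ∀ i ∈ s, u i = true) (v : Fin n → Bool) :
    OFFs v ∩ s ⊆ univ.filter fun i => u i ≠ v i := fun i hi => by
  simp only [OFFs, mem_inter, mem_filter, mem_univ, true_and] at hi ⊢
  simp [hu i hi.2, hi.1]

theorem card_offs_inter_le_hdist {s : Finset (Fin n)} {u : Fin n → Bool}
    (hu : ∀ i ∈ s, u i = true) (v : Fin n → Bool) : (OFFs v ∩ s).card ≤ Hdist u v :=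
  card_le_card (offs_inter_subset_of_forall_true hu v)

theorem card_offs_inter_lt_hdist {s : Finset (Fin n)} {u v : Fin n → Bool} {j : Fin n}
    (hu : ∀ i ∈ s, u i = true) (huj : u j = false) (hvj : v j = true) :
    (OFFs v ∩ s).card < Hdist u v := by
  refine card_lt_card ((ssubset_iff_of_subset (offs_inter_subset_of_forall_true hu v)).2 ⟨j, ?_, ?_⟩)
  · simp [huj, hvj]
  · simp [OFFs, hvj]

end Distance

section Characteristic

variable {n : ℕ} {M : Set (Fin n → Bool)}

theorem exists_mem_charSet_ge {v : Fin n → Bool} (hv : v ∈ M) : ∃ v' ∈ charSet M, v ≤ v' := by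
  induction v using WellFoundedGT.induction with
  | _ v ih =>
    by_cases hch : ClAnd (M \ {v}) v
    · obtain ⟨u, ⟨huM, hne⟩, hvu⟩ := hch.exists_ge
      obtain ⟨v', hv', hle⟩ := ih u (lt_of_le_of_ne hvu (Ne.symm hne)) huM
      exact ⟨v', hv', hvu.trans hle⟩
    · exact ⟨v, ⟨hv, hch⟩, le_rfl⟩

theorem exists_mem_charSet_ge_of_eq_false {v : Fin n → Bool} (hv : v ∈ M) {j : Fin n}
    (hj : v j = false) : ∃ v' ∈ charSet M, v ≤ v' ∧ v' j = false := by
  induction v using WellFoundedGT.induction with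
  | _ v ih =>
    by_cases hch : ClAnd (M \ {v}) v
    · obtain ⟨u, ⟨huM, hne⟩, hvu, huj⟩ := hch.exists_ge_of_eq_false hj
      obtain ⟨v', hv', hle, hv'j⟩ := ih u (lt_of_le_of_ne hvu (Ne.symm hne)) huM huj
      exact ⟨v', hv', hvu.trans hle, hv'j⟩
    · exact ⟨v, ⟨hv, hch⟩, le_rfl, hj⟩

end Characteristic

section Exterior

variable {n : ℕ} (α : ℕ) (M : Set (Fin n → Bool))

theorem exists_mem_sigmaExt_forall_true_iff (s : Finset (Fin n)) :
    (∃ u ∈ sigmaExt α M, ∀ i ∈ s, u i = true) ↔ ∃ v ∈ charSet M, (OFFs v ∩ s).card ≤ α := by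
  constructor
  · rintro ⟨u, ⟨v, hvM, hd⟩, hu⟩
    obtain ⟨v', hv', hvv'⟩ := exists_mem_charSet_ge hvM
    exact ⟨v', hv', (card_offs_inter_le_of_le hvv' s).trans ((card_offs_inter_le_hdist hu v).trans hd)⟩
  · rintro ⟨v, hv, hd⟩
    exact ⟨setTrueOn s v, ⟨v, hv.1, (hdist_setTrueOn_le s v).trans hd⟩, fun i hi => if_pos hi⟩

theorem exists_mem_sigmaExt_forall_true_and_eq_false_iff {s : Finset (Fin n)} {j : Fin n}
    (hj : j ∉ s) :
    (∃ u ∈ sigmaExt α M, (∀ i ∈ s, u i = true) ∧ u j = false) ↔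
      ∃ v ∈ charSet M, (OFFs v ∩ s).card < α ∨ ((OFFs v ∩ s).card = α ∧ j ∈ OFFs v) := by
  constructor
  · rintro ⟨u, ⟨v, hvM, hd⟩, hu, huj⟩
    cases hvj : v j
    · obtain ⟨v', hv', hvv', hv'j⟩ := exists_mem_charSet_ge_of_eq_false hvM hvj
      have hle := (card_offs_inter_le_of_le hvv' s).trans ((card_offs_inter_le_hdist hu v).trans hd)
      exact ⟨v', hv', hle.lt_or_eq.imp_right fun h => ⟨h, by simp [OFFs, hv'j]⟩⟩
    · obtain ⟨v', hv', hvv'⟩ := exists_mem_charSet_ge hvM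
      exact ⟨v', hv', Or.inl ((card_offs_inter_le_of_le hvv' s).trans_lt
        ((card_offs_inter_lt_hdist hu huj hvj).trans_le hd))⟩
  · rintro ⟨v, hv, hlt | ⟨hd, hjv⟩⟩
    · refine ⟨Function.update (setTrueOn s v) j false, ⟨v, hv.1, ?_⟩, fun i hi => ?_, by simp⟩
      · calc Hdist (Function.update (setTrueOn s v) j false) v
            ≤ Hdist (Function.update (setTrueOn s v) j false) (setTrueOn s v)
              + Hdist (setTrueOn s v) v := hammingDist_triangle _ _ _
          _ ≤ 1 + (OFFs v ∩ s).card := add_le_add (hdist_update_le _ j false) (hdist_setTrueOn_le s v)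
          _ ≤ α := by omega
      · rw [Function.update_of_ne (ne_of_mem_of_not_mem hi hj)]
        exact if_pos hi
    · refine ⟨setTrueOn s v, ⟨v, hv.1, (hdist_setTrueOn_le s v).trans hd.le⟩,
        fun i hi => if_pos hi, ?_⟩
      simpa [setTrueOn, hj, OFFs] using hjv

end Exterior

theorem stmt15_general {n : ℕ} (α : ℕ) (M : Set (Fin n → Bool)) (c : Clause n) :
    (∀ w, ClAnd (sigmaExt α M) w → c.sat w) ↔
    ((∀ v ∈ charSet M, α ≤ (OFFs v ∩ c.N).card) ∧
      ((∃ v ∈ charSet M, (OFFs v ∩ c.N).card = α) →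
        ¬ ∀ j ∈ c.P, ∃ v ∈ charSet M,
            (OFFs v ∩ c.N).card = α ∧ j ∈ OFFs v)) := by
  have lowering_iff (j : Fin n) (hj : j ∈ c.P) :=
    exists_mem_sigmaExt_forall_true_and_eq_false_iff α M (disjoint_left.1 c.disj hj)
  rw [forall_clAnd_sat_iff, exists_mem_sigmaExt_forall_true_iff]
  constructor
  · intro h
    refine ⟨fun v hv => not_lt.1 fun hlt => ?_, fun ⟨v, hv, hd⟩ hcover => ?_⟩
    · obtain ⟨j, hj, hnone⟩ := h ⟨v, hv, hlt.le⟩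
      exact hnone ((lowering_iff j hj).2 ⟨v, hv, Or.inl hlt⟩)
    · obtain ⟨j, hj, hnone⟩ := h ⟨v, hv, hd.le⟩
      obtain ⟨v', hv', hd', hjv'⟩ := hcover j hj
      exact hnone ((lowering_iff j hj).2 ⟨v', hv', Or.inr ⟨hd', hjv'⟩⟩)
  · rintro ⟨hge, hcover⟩ ⟨v, hv, hd⟩
    obtain ⟨j, hj, hnot⟩ : ∃ j ∈ c.P, ∀ v ∈ charSet M, (OFFs v ∩ c.N).card = α → j ∉ OFFs v := by
      simpa using hcover ⟨v, hv, le_antisymm hd (hge v hv)⟩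
    refine ⟨j, hj, fun hlow => ?_⟩
    obtain ⟨v', hv', hlt | ⟨hd', hjv'⟩⟩ := (lowering_iff j hj).1 hlow
    · exact (hge v' hv').not_gt hlt
    · exact hnot v' hv' hd' hjv'

theorem stmt15 {n : ℕ} (α : ℕ) (M : Set (Fin n → Bool))
    (hcl : ∀ u ∈ M, ∀ w ∈ M, (fun i => u i && w i) ∈ M) (c : Clause n) :
    (∀ w, ClAnd (sigmaExt α M) w → c.sat w) ↔
    ((∀ v ∈ charSet M, α ≤ (OFFs v ∩ c.N).card) ∧
      ((∃ v ∈ charSet M, (OFFs v ∩ c.N).card = α) →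
        ¬ ∀ j ∈ c.P, ∃ v ∈ charSet M,
            (OFFs v ∩ c.N).card = α ∧ j ∈ OFFs v)) :=
  stmt15_general α M c
end

section
/- Let Σ be a Horn theory, c a clause, and α a nonnegative integer. Then σ_α(Σ) ⊨ c if and only if for every subset S ⊆ P(c) with |S| ≥ |P(c)| − α and every model w of Σ with OFF(w) ∩ P(c) = S, it holds that |OFF(w) ∩ N(c)| ≥ α − |P(c)| + |S| + 1. -/
/-! The assignment `w` lies at Hamming distance exactly
`d(w) = #{i ∈ P | w i = 1} + #{i ∈ N | w i = 0}` from the nearest assignment falsifying `c`,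
attained by setting `P` to `0` and `N` to `1` while keeping `w` elsewhere. Hence every point of the
`α`-exterior satisfies `c` iff `α < d(w)` for every model `w`. Writing `S = OFF(w) ∩ P`, one has
`d(w) = |P| - |S| + |OFF(w) ∩ N|`, and `α < d(w)` is the stated inequality (automatic when
`|S| < |P| - α`). -/

namespace Clause

variable {n : ℕ} (c : Clause n)

theorem not_mem_P_of_mem_N {i : Fin n} (hi : i ∈ c.N) : i ∉ c.P :=
  Finset.disjoint_right.mp c.disj hi

def distToFalse (w : Fin n → Bool) : ℕ :=
  (Finset.univ.filter fun i => (i ∈ c.P ∧ w i = true) ∨ (i ∈ c.N ∧ w i = false)).card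

def falsify (w : Fin n → Bool) : Fin n → Bool :=
  fun i => if i ∈ c.P then false else if i ∈ c.N then true else w i

theorem not_sat_falsify (w : Fin n → Bool) : ¬ c.sat (c.falsify w) := by
  rintro (⟨i, hi, hvi⟩ | ⟨i, hi, hvi⟩)
  · simp [falsify, hi] at hvi
  · simp [falsify, hi, c.not_mem_P_of_mem_N hi] at hvi

theorem hdist_falsify (w : Fin n → Bool) : Hdist (c.falsify w) w = c.distToFalse w := by
  unfold Hdist distToFalse falsify
  congr 1
  ext i
  by_cases hN : i ∈ c.N
  · cases hw : w i <;> simp [hN, c.not_mem_P_of_mem_N hN, hw]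
  · by_cases hP : i ∈ c.P <;> cases hw : w i <;> simp [hP, hN, hw]

theorem distToFalse_le_hdist {v : Fin n → Bool} (hv : ¬ c.sat v) (w : Fin n → Bool) :
    c.distToFalse w ≤ Hdist v w := by
  simp only [sat, not_or, not_exists, not_and, Bool.not_eq_true, Bool.not_eq_false] at hv
  refine Finset.card_le_card fun i => ?_
  simp only [Finset.mem_filter, Finset.mem_univ, true_and]
  rintro (⟨hi, hwi⟩ | ⟨hi, hwi⟩) <;> simp [hv.1 i, hv.2 i, hi, hwi]

theorem distToFalse_add_card_offs_inter_P (w : Fin n → Bool) :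
    c.distToFalse w + (OFFs w ∩ c.P).card = c.P.card + (OFFs w ∩ c.N).card := by
  have hsplit : (Finset.univ.filter fun i => (i ∈ c.P ∧ w i = true) ∨ (i ∈ c.N ∧ w i = false)) =
      c.P.filter (fun i => w i = true) ∪ (OFFs w ∩ c.N) := by
    ext i; simp [OFFs, and_comm]
  have hP : (c.P.filter fun i => w i = true).card + (OFFs w ∩ c.P).card = c.P.card := by
    rw [← Finset.card_union_of_disjoint
      (by simp +contextual [Finset.disjoint_left, OFFs])]
    congr 1
    ext i; cases hw : w i <;> simp [OFFs, hw]
  have hdisj : Disjoint (c.P.filter fun i => w i = true) (OFFs w ∩ c.N) :=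
    Finset.disjoint_of_subset_left (Finset.filter_subset _ _)
      (Finset.disjoint_of_subset_right Finset.inter_subset_right c.disj)
  rw [distToFalse, hsplit, Finset.card_union_of_disjoint hdisj]
  omega

theorem forall_sigmaExt_sat_iff (α : ℕ) (M : Set (Fin n → Bool)) :
    (∀ v ∈ sigmaExt α M, c.sat v) ↔ ∀ w ∈ M, α < c.distToFalse w := by
  constructor
  · intro h w hw
    by_contra! hle
    exact c.not_sat_falsify w (h _ ⟨w, hw, (c.hdist_falsify w).trans_le hle⟩)
  · rintro h v ⟨w, hw, hvw⟩
    by_contra hv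
    exact absurd ((h w hw).trans_le (c.distToFalse_le_hdist hv w)) hvw.not_gt

end Clause

theorem stmt16_general {n : ℕ} (α : ℕ) (M : Set (Fin n → Bool)) (c : Clause n) :
    (∀ v ∈ sigmaExt α M, c.sat v) ↔
    (∀ S ⊆ c.P, (c.P.card : ℤ) - α ≤ S.card →
      ∀ w ∈ M, OFFs w ∩ c.P = S →
        (α : ℤ) - c.P.card + S.card + 1 ≤ ((OFFs w ∩ c.N).card : ℤ)) := by
  rw [c.forall_sigmaExt_sat_iff]
  constructor
  · rintro h S - hS w hw rfl
    have hcard := c.distToFalse_add_card_offs_inter_P w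
    have := h w hw
    omega
  · intro h w hw
    have hcard := c.distToFalse_add_card_offs_inter_P w
    by_contra! hle
    have := h _ Finset.inter_subset_right (by omega) w hw rfl
    omega

theorem stmt16 {n : ℕ} (α : ℕ) (M : Set (Fin n → Bool))
    (hcl : ∀ u ∈ M, ∀ w ∈ M, (fun i => u i && w i) ∈ M) (c : Clause n) :
    (∀ v ∈ sigmaExt α M, c.sat v) ↔
    (∀ S ⊆ c.P, (c.P.card : ℤ) - α ≤ S.card →
      ∀ w ∈ M, OFFs w ∩ c.P = S →
        (α : ℤ) - c.P.card + S.card + 1 ≤ ((OFFs w ∩ c.N).card : ℤ)) :=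
  stmt16_general α M c
end

section
/- Let G = (V, E) be a graph with V = {1,…,n}, and let Σ_G = { ¬x_i ∨ ¬x_j : {i,j} ∈ E }. Then for α = n − k, the all-ones vector (1,…,1) is a model of σ_α(Σ_G) if and only if G has an independent set of size at least k. Consequently, σ_α(Σ_G) ⊨ ⋁_{i=1}^n ¬x_i if and only if G has no independent set of size at least k. -/
/-!
A model `w` of `Σ_G` is the characteristic vector of the independent set `{i | w i = true}`, and its
Hamming distance to `(1, …, 1)` is `n` minus the size of that set. So some model lies within
`n - k` of `(1, …, 1)` exactly when some independent set has at least `k` elements.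
-/

open Finset

variable {n : ℕ}

def trueSet (v : Fin n → Bool) : Finset (Fin n) :=
  univ.filter (v · = true)

@[simp]
lemma mem_trueSet {v : Fin n → Bool} {i : Fin n} : i ∈ trueSet v ↔ v i = true := by
  simp [trueSet]

lemma trueSet_surjective : Function.Surjective (trueSet (n := n)) :=
  fun W => ⟨fun i => decide (i ∈ W), by ext; simp⟩

lemma Hdist_allTrue (v : Fin n → Bool) : Hdist (fun _ => true) v = n - #(trueSet v) := by
  have h := card_filter_add_card_filter_not (s := (univ : Finset (Fin n))) (v · = true)
  rw [card_univ, Fintype.card_fin] at h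
  have hfalse : Hdist (fun _ => true) v = #(univ.filter fun i => ¬ v i = true) := by
    simp only [Hdist, ne_comm]
  rw [hfalse, trueSet]
  omega

lemma allTrue_mem_sigmaExt_iff {k : ℕ} (hk : k ≤ n) (M : Set (Fin n → Bool)) :
    (fun _ => true) ∈ sigmaExt (n - k) M ↔ ∃ w ∈ M, k ≤ #(trueSet w) := by
  refine exists_congr fun w => and_congr_right fun _ => ?_
  have := card_le_univ (trueSet w)
  rw [Hdist_allTrue, Fintype.card_fin] at *
  omega

lemma forall_exists_false_iff (S : Set (Fin n → Bool)) :
    (∀ v ∈ S, ∃ i, v i = false) ↔ (fun _ => true) ∉ S := by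
  refine ⟨fun h hmem => by simpa using h _ hmem, fun h v hv => ?_⟩
  by_contra! hv_true
  have hv_eq : v = fun _ => true := funext fun i => by simpa using hv_true i
  exact h (hv_eq ▸ hv)

/-- The models of `Σ_G = {¬xᵢ ∨ ¬xⱼ | {i, j} ∈ E}`. -/
def independentSetModels (G : SimpleGraph (Fin n)) : Set (Fin n → Bool) :=
  {v | ∀ i j, G.Adj i j → ¬(v i = true ∧ v j = true)}

lemma mem_independentSetModels_iff {G : SimpleGraph (Fin n)} {v : Fin n → Bool} :
    v ∈ independentSetModels G ↔ ∀ i ∈ trueSet v, ∀ j ∈ trueSet v, ¬ G.Adj i j := by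
  simp only [independentSetModels, Set.mem_ofPred_eq, mem_trueSet]
  exact ⟨fun h i hi j hj hadj => h i j hadj ⟨hi, hj⟩, fun h i j hadj ⟨hi, hj⟩ => h i hi j hj hadj⟩

lemma allTrue_mem_sigmaExt_independentSetModels_iff {k : ℕ} (hk : k ≤ n)
    (G : SimpleGraph (Fin n)) :
    (fun _ => true) ∈ sigmaExt (n - k) (independentSetModels G) ↔
      ∃ W : Finset (Fin n), (∀ i ∈ W, ∀ j ∈ W, ¬ G.Adj i j) ∧ k ≤ #W := by
  simp only [allTrue_mem_sigmaExt_iff hk, mem_independentSetModels_iff]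
  rw [trueSet_surjective.exists]

theorem stmt17 {n k : ℕ} (hk : k ≤ n) (G : SimpleGraph (Fin n)) :
    (((fun _ => true) : Fin n → Bool) ∈
        sigmaExt (n - k) {v : Fin n → Bool |
          ∀ i j, G.Adj i j → ¬(v i = true ∧ v j = true)} ↔
      ∃ W : Finset (Fin n), (∀ i ∈ W, ∀ j ∈ W, ¬ G.Adj i j) ∧ k ≤ W.card) ∧
    ((∀ v ∈ sigmaExt (n - k) {v : Fin n → Bool |
          ∀ i j, G.Adj i j → ¬(v i = true ∧ v j = true)}, ∃ i, v i = false) ↔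
      ¬ ∃ W : Finset (Fin n), (∀ i ∈ W, ∀ j ∈ W, ¬ G.Adj i j) ∧ k ≤ W.card) := by
  have allTrue_iff := allTrue_mem_sigmaExt_independentSetModels_iff hk G
  exact ⟨allTrue_iff, (forall_exists_false_iff _).trans (not_congr allTrue_iff)⟩
end

section
/- If Σ is a negative theory (every clause has no positive literal), then for every nonnegative integer α the α-exterior σ_α(Σ) is Horn, i.e., mod(σ_α(Σ)) is closed under componentwise AND; hence σ_α(Σ)_e = σ_α(Σ). -/
theorem Clause.sat_antitone_of_P_eq_empty {n : ℕ} {c : Clause n} (hc : c.P = ∅) :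
    Antitone c.sat := by
  intro v u hvu hu
  rcases hu with ⟨i, hi, _⟩ | ⟨i, hi, hui⟩
  · simp [hc] at hi
  · exact Or.inr ⟨i, hi, by simpa [hui, Bool.le_iff_imp] using hvu i⟩

theorem isLowerSet_models_of_negative {n : ℕ} {T : Finset (Clause n)}
    (hneg : ∀ c ∈ T, c.P = ∅) : IsLowerSet {v | ∀ c ∈ T, c.sat v} :=
  fun _ _ hvu hu c hc => Clause.sat_antitone_of_P_eq_empty (hneg c hc) hvu (hu c hc)

theorem Hdist_inf_le_of_le {n : ℕ} {u v : Fin n → Bool} (w : Fin n → Bool) (hvu : v ≤ u) :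
    Hdist v (v ⊓ w) ≤ Hdist u w := by
  refine Finset.card_le_card fun i => ?_
  have := hvu i
  cases hv : v i <;> cases hu : u i <;> cases w i <;> simp_all [Bool.le_iff_imp]

theorem IsLowerSet.sigmaExt {n : ℕ} {M : Set (Fin n → Bool)} (hM : IsLowerSet M) (α : ℕ) :
    IsLowerSet (sigmaExt α M) := by
  rintro u v hvu ⟨w, hwM, hdist⟩
  exact ⟨v ⊓ w, hM inf_le_right hwM, (Hdist_inf_le_of_le w hvu).trans hdist⟩

theorem setOf_clAnd_eq_of_infClosed {n : ℕ} {S : Set (Fin n → Bool)} (hS : InfClosed S) :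
    {w | ClAnd S w} = S := by
  refine Set.Subset.antisymm (fun w hw => ?_) fun _ => ClAnd.base
  induction hw with
  | base hv => exact hv
  | and _ _ ihu ihv => exact hS ihu ihv

theorem stmt18 {n : ℕ} (α : ℕ) (T : Finset (Clause n))
    (hneg : ∀ c ∈ T, c.P = ∅) :
    (∀ u ∈ sigmaExt α {v | ∀ c ∈ T, c.sat v},
      ∀ w ∈ sigmaExt α {v | ∀ c ∈ T, c.sat v},
        (fun i => u i && w i) ∈ sigmaExt α {v | ∀ c ∈ T, c.sat v}) ∧
    {w | ClAnd (sigmaExt α {v | ∀ c ∈ T, c.sat v}) w}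
      = sigmaExt α {v | ∀ c ∈ T, c.sat v} := by
  have hclosed : InfClosed (sigmaExt α {v | ∀ c ∈ T, c.sat v}) :=
    ((isLowerSet_models_of_negative hneg).sigmaExt α).infClosed
  exact ⟨fun _ hu _ hw => hclosed hu hw, setOf_clAnd_eq_of_infClosed hclosed⟩
end
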